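/- Let F : Δ_A → [0,1]^K be L-Lipschitz. For every pair of players i, j ∈ {1, …, N}, every strategy profile (π¹, …, π^N) ∈ Δ_A^N, and every π, π̄ ∈ Δ_A, it holds that | V^i(π, π^{−j}) − V^i(π̄, π^{−j}) | ≤ L_{j,i} ‖π − π̄‖₂, where L_{j,i} = √K if j = i and L_{j,i} = 2L√(2K)/N if j ≠ i. -/

import Mathlib

open scoped BigOperators
open MeasureTheory ProbabilityTheory Finset

noncomputable section

/-- The probability simplex over `Fin K`, inside Euclidean space (ℓ2 norm). -/
def simplex (K : ℕ) : Set (EuclideanSpace ℝ (Fin K)) :=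
  {x | (∀ a, 0 ≤ x a) ∧ ∑ a, x a = 1}

/-- Empirical occupancy measure `μ̂ = (1/N) ∑_j e_{a^j}` of an action profile. -/
def empDist (K N : ℕ) (v : Fin N → Fin K) : EuclideanSpace ℝ (Fin K) :=
  (N : ℝ)⁻¹ • ∑ j : Fin N, EuclideanSpace.single (v j) (1 : ℝ)

/-- Expected payoff `V^i(π¹,…,π^N) = E[F(μ̂)(a^i)]`, written as the finite sum over
action profiles weighted by the product of the independent mixed strategies. -/
def Vval (K N : ℕ) (F : EuclideanSpace ℝ (Fin K) → EuclideanSpace ℝ (Fin K))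
    (π : Fin N → EuclideanSpace ℝ (Fin K)) (i : Fin N) : ℝ :=
  ∑ v : Fin N → Fin K, (∏ j : Fin N, π j (v j)) * F (empDist K N v) (v i)

/-- Exploitability `E^i_exp(π¹,…,π^N) = sup_{π′∈Δ} V^i(π′,π^{−i}) − V^i(π¹,…,π^N)`. -/
def expl (K N : ℕ) (F : EuclideanSpace ℝ (Fin K) → EuclideanSpace ℝ (Fin K))
    (π : Fin N → EuclideanSpace ℝ (Fin K)) (i : Fin N) : ℝ :=
  (⨆ p : simplex K, Vval K N F (Function.update π i (p : EuclideanSpace ℝ (Fin K))) i)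
    - Vval K N F π i

/-!
`V^i` is affine in the mixed strategy of player `j`: `V^i(π, π^{-j}) = ∑_c π(c) W(c)`, where `W(c)`
is the expected payoff of `i` when `j` plays the pure action `c`. As `π - π̄` sums to zero,
Cauchy–Schwarz bounds `|V^i(π, π^{-j}) - V^i(π̄, π^{-j})|` by `√K ‖π - π̄‖` times the oscillation
`max_{a,b} |W(a) - W(b)|`. Payoffs lie in `[0,1]`, so the oscillation is at most `1`. When `j ≠ i`,
changing the action of `j` leaves the action of `i` alone and moves the empirical distribution by at
most `2/N`, so by the Lipschitz bound on `F` the oscillation is at most `2L/N`.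
-/

section ProductExpectation

variable {ι κ : Type*} [Fintype ι] [DecidableEq ι] [Fintype κ]

def prodExpect (π : ι → EuclideanSpace ℝ κ) (f : (ι → κ) → ℝ) : ℝ :=
  ∑ v, (∏ k, π k (v k)) * f v

theorem prodExpect_sub (π : ι → EuclideanSpace ℝ κ) (f g : (ι → κ) → ℝ) :
    prodExpect π (fun v => f v - g v) = prodExpect π f - prodExpect π g := by
  simp only [prodExpect, mul_sub, Finset.sum_sub_distrib]

theorem prodExpect_const {π : ι → EuclideanSpace ℝ κ} (hπ : ∀ k, ∑ c, π k c = 1) (b : ℝ) :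
    prodExpect π (fun _ => b) = b := by
  rw [prodExpect, ← Finset.sum_mul, ← Fintype.prod_sum]
  simp [hπ]

theorem prodExpect_mem_Icc {π : ι → EuclideanSpace ℝ κ} (hπ₀ : ∀ k c, 0 ≤ π k c)
    (hπ : ∀ k, ∑ c, π k c = 1) {f : (ι → κ) → ℝ} {a b : ℝ} (hf : ∀ v, f v ∈ Set.Icc a b) :
    prodExpect π f ∈ Set.Icc a b := by
  have hw : ∀ v : ι → κ, 0 ≤ ∏ k, π k (v k) := fun v => Finset.prod_nonneg fun k _ => hπ₀ k _
  constructor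
  · calc a = prodExpect π (fun _ => a) := (prodExpect_const hπ a).symm
      _ ≤ prodExpect π f :=
          Finset.sum_le_sum fun v _ => mul_le_mul_of_nonneg_left (hf v).1 (hw v)
  · calc prodExpect π f ≤ prodExpect π (fun _ => b) :=
          Finset.sum_le_sum fun v _ => mul_le_mul_of_nonneg_left (hf v).2 (hw v)
      _ = b := prodExpect_const hπ b

theorem abs_prodExpect_le {π : ι → EuclideanSpace ℝ κ} (hπ₀ : ∀ k c, 0 ≤ π k c)
    (hπ : ∀ k, ∑ c, π k c = 1) {f : (ι → κ) → ℝ} {C : ℝ} (hf : ∀ v, |f v| ≤ C) :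
    |prodExpect π f| ≤ C :=
  abs_le.2 (prodExpect_mem_Icc hπ₀ hπ fun v => abs_le.1 (hf v))

/-- Conditioning on the action of player `j`: the reindexing `(c, v) ↦ (v j, update v j c)` is an
involution, and summing out the old `v j` contributes the factor `∑ d, π j d = 1`. -/
theorem prodExpect_update {π : ι → EuclideanSpace ℝ κ} {j : ι}
    (hπj : ∑ c, π j c = 1) (p : EuclideanSpace ℝ κ) (f : (ι → κ) → ℝ) :
    prodExpect (Function.update π j p) f
      = ∑ c, p c * prodExpect π (fun v => f (Function.update v j c)) := by
  set σ : κ × (ι → κ) → κ × (ι → κ) := fun cv => (cv.2 j, Function.update cv.2 j cv.1)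
  have hσ : Function.Involutive σ := fun cv => by simp [σ]
  set g : κ × (ι → κ) → ℝ := fun cv =>
    p cv.1 * ((∏ k, π k (cv.2 k)) * f (Function.update cv.2 j cv.1))
  set P : (ι → κ) → ℝ := fun u => ∏ k ∈ {j}ᶜ, π k (u k)
  have hP : ∀ u (G : ι → ℝ), (∀ k ≠ j, G k = π k (u k)) → ∏ k, G k = G j * P u :=
    fun u G hG => by
      rw [Fintype.prod_eq_mul_prod_compl j]
      exact congrArg _ (Finset.prod_congr rfl fun k hk => hG k (by simpa using hk))
  calc prodExpect (Function.update π j p) f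
      = ∑ u, ∑ d, g (σ (d, u)) := by
        refine Fintype.sum_congr _ _ fun u => ?_
        have hσu : ∀ d, g (σ (d, u)) = p (u j) * ((π j d * P u) * f u) := fun d => by
          simp only [g, σ, Function.update_idem, Function.update_eq_self]
          rw [hP u _ fun k hk => by rw [Function.update_of_ne hk], Function.update_self]
        rw [Fintype.sum_congr _ _ hσu, ← Finset.mul_sum, ← Finset.sum_mul, ← Finset.sum_mul, hπj,
          hP u _ fun k hk => by rw [Function.update_of_ne hk], Function.update_self]
        ring
    _ = ∑ cv, g cv := by
        rw [Finset.sum_comm, ← Fintype.sum_prod_type']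
        exact Equiv.sum_comp hσ.toPerm g
    _ = _ := by
        simp only [Fintype.sum_prod_type, prodExpect, Finset.mul_sum, g]

end ProductExpectation

/-- Subtracting a constant from `w` does not change the sum, so only the oscillation of `w`
enters Cauchy–Schwarz. -/
theorem abs_sum_mul_le_of_sum_eq_zero {ι : Type*} [Fintype ι] {x : EuclideanSpace ℝ ι}
    {w : ι → ℝ} {C : ℝ} (hx : ∑ a, x a = 0) (hw : ∀ a b, |w a - w b| ≤ C) :
    |∑ a, x a * w a| ≤ √(Fintype.card ι) * C * ‖x‖ := by
  rcases isEmpty_or_nonempty ι with hι | ⟨⟨a₀⟩⟩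
  · simp
  have hC : 0 ≤ C := (abs_nonneg _).trans (hw a₀ a₀)
  have hshift : ∑ a, x a * w a = ∑ a, x a * (w a - w a₀) := by
    simp only [mul_sub, Finset.sum_sub_distrib, ← Finset.sum_mul, hx, zero_mul, sub_zero]
  have hosc : ∑ a, |w a - w a₀| ^ 2 ≤ Fintype.card ι * C ^ 2 := by
    calc ∑ a, |w a - w a₀| ^ 2 ≤ ∑ _a : ι, C ^ 2 :=
          Finset.sum_le_sum fun a _ => pow_le_pow_left₀ (abs_nonneg _) (hw a a₀) 2
      _ = Fintype.card ι * C ^ 2 := by simp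
  calc |∑ a, x a * w a| ≤ ∑ a, |x a| * |w a - w a₀| := by
        rw [hshift]
        simpa only [abs_mul] using Finset.abs_sum_le_sum_abs (fun a => x a * (w a - w a₀)) _
    _ ≤ √(∑ a, |x a| ^ 2) * √(∑ a, |w a - w a₀| ^ 2) := Real.sum_mul_le_sqrt_mul_sqrt _ _ _
    _ ≤ ‖x‖ * √(Fintype.card ι * C ^ 2) := by
        rw [EuclideanSpace.norm_eq]
        simp only [Real.norm_eq_abs]
        gcongr
    _ = √(Fintype.card ι) * C * ‖x‖ := by
        rw [Real.sqrt_mul (Nat.cast_nonneg _), Real.sqrt_sq hC]; ring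

theorem empDist_apply (K N : ℕ) (v : Fin N → Fin K) (a : Fin K) :
    empDist K N v a = (N : ℝ)⁻¹ * #{j | v j = a} := by
  simp [empDist, Pi.single_apply, @eq_comm _ a]

theorem empDist_mem_simplex {K N : ℕ} (hN : 0 < N) (v : Fin N → Fin K) :
    empDist K N v ∈ simplex K := by
  refine ⟨fun a => by rw [empDist_apply]; positivity, ?_⟩
  simp only [empDist_apply, ← Finset.mul_sum]
  rw [← Nat.cast_sum, ← Finset.card_eq_sum_card_fiberwise fun _ _ => Finset.mem_univ _,
    Finset.card_univ, Fintype.card_fin]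
  exact inv_mul_cancel₀ (by positivity)

theorem empDist_update_sub {K N : ℕ} (v : Fin N → Fin K) (j : Fin N) (a : Fin K) :
    empDist K N (Function.update v j a) - empDist K N v
      = (N : ℝ)⁻¹ • (EuclideanSpace.single a 1 - EuclideanSpace.single (v j) 1) := by
  rw [empDist, empDist, ← smul_sub]
  congr 1
  have hrest : ∑ k ∈ {j}ᶜ, EuclideanSpace.single (Function.update v j a k) (1 : ℝ)
      = ∑ k ∈ {j}ᶜ, EuclideanSpace.single (v k) (1 : ℝ) :=
    Finset.sum_congr rfl fun k hk => by rw [Function.update_of_ne (by simpa using hk)]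
  rw [Fintype.sum_eq_add_sum_compl j, Fintype.sum_eq_add_sum_compl j, Function.update_self, hrest]
  abel

theorem norm_empDist_update_sub_le {K N : ℕ} (v : Fin N → Fin K) (j : Fin N) (a : Fin K) :
    ‖empDist K N (Function.update v j a) - empDist K N v‖ ≤ 2 / N := by
  rw [empDist_update_sub, norm_smul, norm_inv, Real.norm_natCast, div_eq_inv_mul]
  gcongr
  calc _ ≤ ‖EuclideanSpace.single a (1 : ℝ)‖ + ‖EuclideanSpace.single (v j) (1 : ℝ)‖ :=
        norm_sub_le _ _
    _ = 2 := by norm_num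

def payoff (K N : ℕ) (F : EuclideanSpace ℝ (Fin K) → EuclideanSpace ℝ (Fin K)) (i : Fin N)
    (v : Fin N → Fin K) : ℝ :=
  F (empDist K N v) (v i)

theorem Vval_eq_prodExpect (K N : ℕ) (F : EuclideanSpace ℝ (Fin K) → EuclideanSpace ℝ (Fin K))
    (π : Fin N → EuclideanSpace ℝ (Fin K)) (i : Fin N) :
    Vval K N F π i = prodExpect π (payoff K N F i) :=
  rfl

theorem payoff_mem_Icc {K N : ℕ} (hN : 0 < N)
    {F : EuclideanSpace ℝ (Fin K) → EuclideanSpace ℝ (Fin K)}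
    (hFmap : ∀ μ ∈ simplex K, ∀ a : Fin K, F μ a ∈ Set.Icc (0 : ℝ) 1) (i : Fin N)
    (v : Fin N → Fin K) : payoff K N F i v ∈ Set.Icc 0 1 :=
  hFmap _ (empDist_mem_simplex hN v) (v i)

theorem abs_payoff_update_sub_le {K N : ℕ} (hN : 0 < N) {L : ℝ} (hL : 0 ≤ L)
    {F : EuclideanSpace ℝ (Fin K) → EuclideanSpace ℝ (Fin K)}
    (hFlip : ∀ μ ∈ simplex K, ∀ μ' ∈ simplex K, ‖F μ - F μ'‖ ≤ L * ‖μ - μ'‖)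
    {i j : Fin N} (hji : j ≠ i) (v : Fin N → Fin K) (a b : Fin K) :
    |payoff K N F i (Function.update v j a) - payoff K N F i (Function.update v j b)|
      ≤ 2 * L / N := by
  set u := Function.update v j b
  have hu : Function.update v j a = Function.update u j a := by simp [u]
  have hui : Function.update u j a i = u i := Function.update_of_ne hji.symm _ _
  rw [hu, payoff, payoff, hui, ← PiLp.sub_apply, ← Real.norm_eq_abs]
  calc _ ≤ ‖F (empDist K N (Function.update u j a)) - F (empDist K N u)‖ :=
        PiLp.norm_apply_le _ _
    _ ≤ L * ‖empDist K N (Function.update u j a) - empDist K N u‖ :=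
        hFlip _ (empDist_mem_simplex hN _) _ (empDist_mem_simplex hN _)
    _ ≤ L * (2 / N) := by gcongr; exact norm_empDist_update_sub_le u j a
    _ = 2 * L / N := by ring

theorem stmt1_general (K N : ℕ) (hN : 0 < N) (L : ℝ) (hL : 0 ≤ L)
    (F : EuclideanSpace ℝ (Fin K) → EuclideanSpace ℝ (Fin K))
    (hFmap : ∀ μ ∈ simplex K, ∀ a : Fin K, F μ a ∈ Set.Icc (0 : ℝ) 1)
    (hFlip : ∀ μ ∈ simplex K, ∀ μ' ∈ simplex K, ‖F μ - F μ'‖ ≤ L * ‖μ - μ'‖)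
    (π : Fin N → EuclideanSpace ℝ (Fin K)) (hπ : ∀ k, π k ∈ simplex K)
    (i j : Fin N) (p p' : EuclideanSpace ℝ (Fin K))
    (hp : p ∈ simplex K) (hp' : p' ∈ simplex K) :
    |Vval K N F (Function.update π j p) i - Vval K N F (Function.update π j p') i|
      ≤ (if j = i then Real.sqrt K else 2 * L * Real.sqrt (2 * K) / N) * ‖p - p'‖ := by
  have hπ₀ : ∀ k c, 0 ≤ π k c := fun k => (hπ k).1
  have hπ₁ : ∀ k, ∑ c, π k c = 1 := fun k => (hπ k).2
  set W : Fin K → ℝ := fun c => prodExpect π fun v => payoff K N F i (Function.update v j c)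
  have hV : ∀ q, Vval K N F (Function.update π j q) i = ∑ c, q c * W c := fun q => by
    rw [Vval_eq_prodExpect]
    exact prodExpect_update (hπ₁ j) q _
  have hbound : ∀ C, (∀ a b, |W a - W b| ≤ C) →
      |Vval K N F (Function.update π j p) i - Vval K N F (Function.update π j p') i|
        ≤ √K * C * ‖p - p'‖ := fun C hC => by
    have hsum : ∑ c, (p - p') c = 0 := by simp [Finset.sum_sub_distrib, hp.2, hp'.2]
    rw [hV, hV, ← Finset.sum_sub_distrib]
    simpa [sub_mul] using abs_sum_mul_le_of_sum_eq_zero hsum hC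
  split_ifs with hji
  · have hW : ∀ c, W c ∈ Set.Icc (0 : ℝ) 1 := fun c =>
      prodExpect_mem_Icc hπ₀ hπ₁ fun v => payoff_mem_Icc hN hFmap i _
    simpa using hbound 1 fun a b => abs_sub_le_of_nonneg_of_le (hW a).1 (hW a).2 (hW b).1 (hW b).2
  · have hW : ∀ a b, |W a - W b| ≤ 2 * L / N := fun a b => by
      rw [← prodExpect_sub]
      exact abs_prodExpect_le hπ₀ hπ₁ fun v => abs_payoff_update_sub_le hN hL hFlip hji v a b
    have hK2 : √K ≤ √(2 * K) := Real.sqrt_le_sqrt (by linarith [(Nat.cast_nonneg K : (0 : ℝ) ≤ K)])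
    calc _ ≤ 2 * L / N * √K * ‖p - p'‖ := by simpa [mul_comm] using hbound _ hW
      _ ≤ 2 * L / N * √(2 * K) * ‖p - p'‖ := by gcongr
      _ = 2 * L * √(2 * K) / N * ‖p - p'‖ := by ring

/-- Lipschitz continuity of `V^i`, Lemma 2 of the paper.
For `L`-Lipschitz `F : Δ_A → [0,1]^K`, players `i, j`, a strategy profile `(π¹,…,π^N)` and
`π, π̄ ∈ Δ_A`: `|V^i(π, π^{−j}) − V^i(π̄, π^{−j})| ≤ L_{j,i} ‖π − π̄‖₂` with `L_{j,i} = √K` if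
`j = i` and `L_{j,i} = 2L√(2K)/N` otherwise. -/
theorem stmt1 (K N : ℕ) (hK : 0 < K) (hN : 0 < N) (L : ℝ) (hL : 0 ≤ L)
    (F : EuclideanSpace ℝ (Fin K) → EuclideanSpace ℝ (Fin K))
    (hFmap : ∀ μ ∈ simplex K, ∀ a : Fin K, F μ a ∈ Set.Icc (0 : ℝ) 1)
    (hFlip : ∀ μ ∈ simplex K, ∀ μ' ∈ simplex K, ‖F μ - F μ'‖ ≤ L * ‖μ - μ'‖)
    (π : Fin N → EuclideanSpace ℝ (Fin K)) (hπ : ∀ k, π k ∈ simplex K)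
    (i j : Fin N) (p p' : EuclideanSpace ℝ (Fin K))
    (hp : p ∈ simplex K) (hp' : p' ∈ simplex K) :
    |Vval K N F (Function.update π j p) i - Vval K N F (Function.update π j p') i|
      ≤ (if j = i then Real.sqrt K else 2 * L * Real.sqrt (2 * K) / N) * ‖p - p'‖ :=
  stmt1_general K N hN L hL F hFmap hFlip π hπ i j p p' hp hp'
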